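/- Let P be a Markov probability measure on path space. Then for any t ∈ [0,1] and events A ∈ 𝒜_{[0,t]}, B ∈ 𝒜_{[t,1]}: P(A ∩ B | X_0, X_t, X_1) = P(A | X_0, X_t) · P(B | X_0, X_t, X_1), P-a.s. Consequently, P(A ∩ B | σ(X_0, X_t, X_1)) = P(A | σ(X_0, X_t, X_1)) P(B | σ(X_0, X_t, X_1)) a.s., i.e., the conditional laws of P given (X_0, X_1) are Markov in the sense that past and future given X_t are conditionally independent under the pinned conditioning. -/

import Mathlib

open MeasureTheory

noncomputable section

variable {Ω 𝒳 : Type*}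

/-- σ-algebra generated by the canonical process on the time window `[s,u]`. -/
def window [MeasurableSpace 𝒳] (X : ℝ → Ω → 𝒳) (s u : ℝ) : MeasurableSpace Ω :=
  ⨆ r ∈ Set.Icc s u, MeasurableSpace.comap (X r) inferInstance

/-- σ-algebra generated by the position at time `t`. -/
def at1 [MeasurableSpace 𝒳] (X : ℝ → Ω → 𝒳) (t : ℝ) : MeasurableSpace Ω :=
  MeasurableSpace.comap (X t) inferInstance

/-- σ-algebra generated by the pair of positions at times `s` and `u`. -/
def at2 [MeasurableSpace 𝒳] (X : ℝ → Ω → 𝒳) (s u : ℝ) : MeasurableSpace Ω :=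
  MeasurableSpace.comap (fun ω => (X s ω, X u ω)) inferInstance

/-- Indicator function of an event, real-valued. -/
def ind (A : Set Ω) : Ω → ℝ := A.indicator (fun _ => 1)

/-- The two-sided (symmetric) Markov property: for every time `t ∈ [0,1]`, past and future
events are conditionally independent given the present position `X t`. -/
def IsMarkov [MeasurableSpace Ω] [MeasurableSpace 𝒳]
    (X : ℝ → Ω → 𝒳) (P : Measure Ω) : Prop :=
  ∀ t ∈ Set.Icc (0:ℝ) 1, ∀ A B : Set Ω,
    MeasurableSet[window X 0 t] A → MeasurableSet[window X t 1] B →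
    P[ind (A ∩ B) | at1 X t] =ᵐ[P] P[ind A | at1 X t] * P[ind B | at1 X t]

/-- The reciprocal property: for all `0 ≤ s ≤ u ≤ 1`, the events inside `[s,u]` and those
outside are conditionally independent given the pair `(X s, X u)`. -/
def IsReciprocal [MeasurableSpace Ω] [MeasurableSpace 𝒳]
    (X : ℝ → Ω → 𝒳) (P : Measure Ω) : Prop :=
  ∀ s u : ℝ, 0 ≤ s → s ≤ u → u ≤ 1 → ∀ A B C : Set Ω,
    MeasurableSet[window X 0 s] A → MeasurableSet[window X s u] B →
    MeasurableSet[window X u 1] C →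
    P[ind (A ∩ B ∩ C) | at2 X s u] =ᵐ[P]
      P[ind (A ∩ C) | at2 X s u] * P[ind B | at2 X s u]

/-- σ-algebra generated by the positions at times `0`, `t` and `1`. -/
def at3 [MeasurableSpace 𝒳] (X : ℝ → Ω → 𝒳) (t : ℝ) : MeasurableSpace Ω :=
  MeasurableSpace.comap (fun ω => (X 0 ω, X t ω, X 1 ω)) inferInstance

/-! The Markov property says that the past `window X 0 t` and the future `window X t 1` are
conditionally independent given `X t`. Since `X 0` is a past variable, enlarging the conditioning
to `σ(X 0, X t)` keeps this independence, and a π-λ argument on the rectangles `V ∩ W`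
(`V ∈ σ(X 0, X t)`, `W` future) upgrades it to
`P(A | σ(X 0, X t) ⊔ future) = P(A | X 0, X t)` for every past event `A`.
Because `σ(X 0, X t) ≤ σ(X 0, X t, X 1) ≤ σ(X 0, X t) ⊔ future`, the tower property then gives
`P(A | X 0, X t, X 1) = P(A | X 0, X t)`, and pulling the future indicator `1_B` out of the
conditional expectation given `σ(X 0, X t) ⊔ future` gives
`P(A ∩ B | X 0, X t, X 1) = P(A | X 0, X t) P(B | X 0, X t, X 1)`. -/

section SigmaAlgebras

variable [MeasurableSpace 𝒳] {X : ℝ → Ω → 𝒳}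

lemma at2_eq_sup (X : ℝ → Ω → 𝒳) (s u : ℝ) : at2 X s u = at1 X s ⊔ at1 X u :=
  MeasurableSpace.comap_prodMk (X s) (X u)

lemma at3_eq_sup (X : ℝ → Ω → 𝒳) (t : ℝ) : at3 X t = at1 X 0 ⊔ at2 X t 1 :=
  MeasurableSpace.comap_prodMk (X 0) fun ω => (X t ω, X 1 ω)

lemma at1_le_window {r s u : ℝ} (hr : r ∈ Set.Icc s u) : at1 X r ≤ window X s u :=
  le_biSup (fun r => MeasurableSpace.comap (X r) inferInstance) hr

lemma window_le [mΩ : MeasurableSpace Ω] (hX : ∀ t, Measurable (X t)) (s u : ℝ) :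
    window X s u ≤ mΩ :=
  iSup₂_le fun r _ => (hX r).comap_le

lemma at1_le_at2 (s u : ℝ) : at1 X u ≤ at2 X s u := by
  rw [at2_eq_sup]
  exact le_sup_right

lemma at2_le_window {s u : ℝ} (hsu : s ≤ u) : at2 X s u ≤ window X s u := by
  rw [at2_eq_sup]
  exact sup_le (at1_le_window ⟨le_rfl, hsu⟩) (at1_le_window ⟨hsu, le_rfl⟩)

lemma at2_le_at3 (t : ℝ) : at2 X 0 t ≤ at3 X t := by
  rw [at3_eq_sup, at2_eq_sup, at2_eq_sup]
  exact sup_le_sup_left le_sup_left _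

lemma at3_le_at2_sup_window {t : ℝ} (ht : t ≤ 1) : at3 X t ≤ at2 X 0 t ⊔ window X t 1 := by
  rw [at3_eq_sup, at2_eq_sup, at2_eq_sup, sup_assoc]
  exact sup_le_sup_left (sup_le_sup_left (at1_le_window ⟨ht, le_rfl⟩) _) _

end SigmaAlgebras

section Indicators

lemma norm_ind_le (S : Set Ω) (ω : Ω) : ‖ind S ω‖ ≤ 1 := by
  by_cases h : ω ∈ S <;> simp [ind, h]

lemma ind_inter (S T : Set Ω) : ind (S ∩ T) = ind S * ind T :=
  Set.inter_indicator_one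

lemma ind_mul (S : Set Ω) (g : Ω → ℝ) : ind S * g = S.indicator g := by
  ext ω
  by_cases h : ω ∈ S <;> simp [ind, h]

variable {m : MeasurableSpace Ω} [mΩ : MeasurableSpace Ω] {P : Measure Ω} {S T : Set Ω}

lemma integral_ind_mul (hS : MeasurableSet S) (g : Ω → ℝ) :
    ∫ ω, (ind S * g) ω ∂P = ∫ ω in S, g ω ∂P := by
  rw [ind_mul, integral_indicator hS]

lemma integrable_ind [IsFiniteMeasure P] (hS : MeasurableSet S) : Integrable (ind S) P :=
  (integrable_const 1).indicator hS

lemma MeasureTheory.Integrable.mul_ind [IsFiniteMeasure P] {f : Ω → ℝ} (hf : Integrable f P)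
    (hS : MeasurableSet S) : Integrable (f * ind S) P := by
  rw [mul_comm, ind_mul]
  exact hf.indicator hS

lemma ae_norm_condExp_ind_le (m : MeasurableSpace Ω) (S : Set Ω) :
    ∀ᵐ ω ∂P, ‖P[ind S|m] ω‖ ≤ 1 :=
  ae_bdd_norm_condExp_of_ae_bdd_norm (.of_forall (norm_ind_le S))

variable [IsFiniteMeasure P]

lemma integral_mul_condExp (hm : m ≤ mΩ) {k f : Ω → ℝ} (hk : StronglyMeasurable[m] k)
    (hk_bdd : ∀ᵐ ω ∂P, ‖k ω‖ ≤ 1) (hf : Integrable f P) :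
    ∫ ω, (k * P[f|m]) ω ∂P = ∫ ω, (k * f) ω ∂P := by
  rw [← integral_condExp hm (f := k * f)]
  exact integral_congr_ae (condExp_stronglyMeasurable_mul_of_bound hm hk hf 1 hk_bdd).symm

lemma integral_ind_mul_condExp_ind (hm : m ≤ mΩ) (hS : MeasurableSet S) (T : Set Ω) :
    ∫ ω, (ind S * P[ind T|m]) ω ∂P = ∫ ω, (P[ind S|m] * P[ind T|m]) ω ∂P := by
  rw [mul_comm (ind S), mul_comm (P[ind S|m]), integral_mul_condExp hm stronglyMeasurable_condExp
    (ae_norm_condExp_ind_le m T) (integrable_ind hS)]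

lemma condExp_ind_inter (hS : MeasurableSet[m] S) (hT : MeasurableSet T) :
    P[ind (S ∩ T)|m] =ᵐ[P] ind S * P[ind T|m] := by
  rw [ind_inter, ind_mul, ind_mul]
  exact condExp_indicator (integrable_ind hT) hS

end Indicators

section PiSystem

lemma isPiSystem_image2_inter (n G : MeasurableSpace Ω) :
    IsPiSystem (Set.image2 (· ∩ ·) {s | MeasurableSet[n] s} {s | MeasurableSet[G] s}) := by
  rintro _ ⟨V₁, hV₁, W₁, hW₁, rfl⟩ _ ⟨V₂, hV₂, W₂, hW₂, rfl⟩ -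
  exact ⟨V₁ ∩ V₂, hV₁.inter hV₂, W₁ ∩ W₂, hW₁.inter hW₂, Set.inter_inter_inter_comm _ _ _ _⟩

lemma sup_eq_generateFrom_image2_inter (n G : MeasurableSpace Ω) :
    n ⊔ G =
      .generateFrom (Set.image2 (· ∩ ·) {s | MeasurableSet[n] s} {s | MeasurableSet[G] s}) := by
  refine le_antisymm (sup_le (fun V hV => ?_) (fun W hW => ?_))
    (MeasurableSpace.generateFrom_le ?_)
  · exact .basic _ ⟨V, hV, .univ, .univ, Set.inter_univ V⟩
  · exact .basic _ ⟨.univ, .univ, W, hW, Set.univ_inter W⟩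
  · rintro _ ⟨V, hV, W, hW, rfl⟩
    exact (le_sup_left (b := G) _ hV).inter (le_sup_right (a := n) _ hW)

variable {m : MeasurableSpace Ω} [mΩ : MeasurableSpace Ω] {P : Measure Ω}

lemma setIntegral_eq_of_isPiSystem (hm : m ≤ mΩ) {p : Set (Set Ω)}
    (h_eq : m = .generateFrom p) (h_inter : IsPiSystem p) {f g : Ω → ℝ}
    (hf : Integrable f P) (hg : Integrable g P) (h_univ : ∫ ω, f ω ∂P = ∫ ω, g ω ∂P)
    (basic : ∀ s ∈ p, ∫ ω in s, f ω ∂P = ∫ ω in s, g ω ∂P) {s : Set Ω}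
    (hs : MeasurableSet[m] s) : ∫ ω in s, f ω ∂P = ∫ ω in s, g ω ∂P := by
  induction s, hs using MeasurableSpace.induction_on_inter h_eq h_inter with
  | empty => simp
  | basic s hs => exact basic s hs
  | compl s hs ih =>
    have hf' := integral_add_compl (hm s hs) hf
    have hg' := integral_add_compl (hm s hs) hg
    linarith
  | iUnion s hdisj hs ih =>
    rw [integral_iUnion (fun i => hm _ (hs i)) hdisj hf.integrableOn,
      integral_iUnion (fun i => hm _ (hs i)) hdisj hg.integrableOn]
    exact tsum_congr ih

end PiSystem

/-- Conditional independence of `F` and `G` given `m`, in the product form for indicators.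
Mathlib's `ProbabilityTheory.CondIndep` would require `Ω` to be standard Borel. -/
def CondIndepInd (m F G : MeasurableSpace Ω) [MeasurableSpace Ω] (P : Measure Ω) : Prop :=
  ∀ A B : Set Ω, MeasurableSet[F] A → MeasurableSet[G] B →
    P[ind (A ∩ B)|m] =ᵐ[P] P[ind A|m] * P[ind B|m]

namespace CondIndepInd

variable {m n F G : MeasurableSpace Ω} [mΩ : MeasurableSpace Ω] {P : Measure Ω} [IsFiniteMeasure P]

lemma integral_condExp_mul_condExp (h : CondIndepInd m F G P) (hm : m ≤ mΩ) {A B : Set Ω}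
    (hA : MeasurableSet[F] A) (hB : MeasurableSet[G] B) :
    ∫ ω, (P[ind A|m] * P[ind B|m]) ω ∂P = ∫ ω, ind (A ∩ B) ω ∂P := by
  rw [← integral_condExp hm (f := ind (A ∩ B))]
  exact integral_congr_ae (h A B hA hB).symm

lemma condExp_ind_eq (h : CondIndepInd m F G P) (hmF : m ≤ F) (hF : F ≤ mΩ) (hG : G ≤ mΩ)
    {B : Set Ω} (hB : MeasurableSet[G] B) : P[ind B|F] =ᵐ[P] P[ind B|m] := by
  refine (ae_eq_condExp_of_forall_setIntegral_eq hF (integrable_ind (hG B hB))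
    (fun _ _ _ => integrable_condExp.integrableOn) (fun A hA _ => ?_)
    (stronglyMeasurable_condExp.mono hmF).aestronglyMeasurable).symm
  have hA' : MeasurableSet A := hF A hA
  calc ∫ ω in A, P[ind B|m] ω ∂P
      = ∫ ω, (P[ind A|m] * P[ind B|m]) ω ∂P := by
        rw [← integral_ind_mul hA', integral_ind_mul_condExp_ind (hmF.trans hF) hA']
    _ = ∫ ω in A, ind B ω ∂P := by
        rw [h.integral_condExp_mul_condExp (hmF.trans hF) hA hB, ind_inter, integral_ind_mul hA']

lemma condExp_ind_eq_of_le (h : CondIndepInd m F G P) (hmn : m ≤ n) (hnF : n ≤ F)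
    (hF : F ≤ mΩ) (hG : G ≤ mΩ) {B : Set Ω} (hB : MeasurableSet[G] B) :
    P[ind B|n] =ᵐ[P] P[ind B|m] :=
  calc P[ind B|n] =ᵐ[P] P[P[ind B|F]|n] := (condExp_condExp_of_le hnF hF).symm
    _ =ᵐ[P] P[P[ind B|m]|n] := condExp_congr_ae (h.condExp_ind_eq (hmn.trans hnF) hF hG hB)
    _ = P[ind B|m] := condExp_of_stronglyMeasurable (hnF.trans hF)
        (stronglyMeasurable_condExp.mono hmn) integrable_condExp

lemma integral_ind_mul_condExp_ind_of_le (h : CondIndepInd m F G P) (hmn : m ≤ n) (hnF : n ≤ F)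
    (hF : F ≤ mΩ) (hG : G ≤ mΩ) {U W : Set Ω} (hU : MeasurableSet[F] U)
    (hW : MeasurableSet[G] W) :
    ∫ ω, (ind W * P[ind U|n]) ω ∂P = ∫ ω, ind (U ∩ W) ω ∂P := by
  have hn : n ≤ mΩ := hnF.trans hF
  have hm : m ≤ mΩ := hmn.trans hn
  calc ∫ ω, (ind W * P[ind U|n]) ω ∂P
      = ∫ ω, (P[ind W|n] * P[ind U|n]) ω ∂P := integral_ind_mul_condExp_ind hn (hG W hW) U
    _ = ∫ ω, (P[ind W|m] * P[ind U|n]) ω ∂P :=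
        integral_congr_ae ((h.condExp_ind_eq_of_le hmn hnF hF hG hW).mul .rfl)
    _ = ∫ ω, (P[ind W|m] * ind U) ω ∂P := integral_mul_condExp hn
        (stronglyMeasurable_condExp.mono hmn) (ae_norm_condExp_ind_le m W)
        (integrable_ind (hF U hU))
    _ = ∫ ω, (ind U * P[ind W|m]) ω ∂P := by rw [mul_comm]
    _ = ∫ ω, (P[ind U|m] * P[ind W|m]) ω ∂P := integral_ind_mul_condExp_ind hm (hF U hU) W
    _ = ∫ ω, ind (U ∩ W) ω ∂P := h.integral_condExp_mul_condExp hm hU hW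

lemma condExp_ind_sup_eq (h : CondIndepInd m F G P) (hmn : m ≤ n) (hnF : n ≤ F)
    (hF : F ≤ mΩ) (hG : G ≤ mΩ) {A : Set Ω} (hA : MeasurableSet[F] A) :
    P[ind A|n ⊔ G] =ᵐ[P] P[ind A|n] := by
  have hnG : n ⊔ G ≤ mΩ := sup_le (hnF.trans hF) hG
  have hA' : MeasurableSet A := hF A hA
  refine (ae_eq_condExp_of_forall_setIntegral_eq hnG (integrable_ind hA')
    (fun _ _ _ => integrable_condExp.integrableOn) (fun D hD _ => ?_)
    (stronglyMeasurable_condExp.mono (le_sup_left : n ≤ n ⊔ G)).aestronglyMeasurable).symm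
  refine setIntegral_eq_of_isPiSystem hnG (sup_eq_generateFrom_image2_inter n G)
    (isPiSystem_image2_inter n G) integrable_condExp (integrable_ind hA')
    (integral_condExp (hnF.trans hF)) ?_ hD
  rintro _ ⟨V, hV, W, hW, rfl⟩
  have hVW : MeasurableSet (V ∩ W) := (hnF.trans hF _ hV).inter (hG W hW)
  calc ∫ ω in V ∩ W, P[ind A|n] ω ∂P
      = ∫ ω, (ind W * (ind V * P[ind A|n])) ω ∂P := by
        rw [← integral_ind_mul hVW, ind_inter, mul_comm (ind V), mul_assoc]
    _ = ∫ ω, (ind W * P[ind (V ∩ A)|n]) ω ∂P :=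
        integral_congr_ae (Filter.EventuallyEq.rfl.mul (condExp_ind_inter hV hA').symm)
    _ = ∫ ω, ind (V ∩ A ∩ W) ω ∂P :=
        h.integral_ind_mul_condExp_ind_of_le hmn hnF hF hG ((hnF _ hV).inter hA) hW
    _ = ∫ ω in V ∩ W, ind A ω ∂P := by
        rw [← integral_ind_mul hVW, ← ind_inter, Set.inter_right_comm]

end CondIndepInd

section ConditionalSup

variable {n G k : MeasurableSpace Ω} [mΩ : MeasurableSpace Ω] {P : Measure Ω} [IsFiniteMeasure P]
  {f : Ω → ℝ}

lemma condExp_eq_of_condExp_sup_eq (hnk : n ≤ k) (hkG : k ≤ n ⊔ G) (hnG : n ⊔ G ≤ mΩ)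
    (hsup : P[f|n ⊔ G] =ᵐ[P] P[f|n]) : P[f|k] =ᵐ[P] P[f|n] :=
  calc P[f|k] =ᵐ[P] P[P[f|n ⊔ G]|k] := (condExp_condExp_of_le hkG hnG).symm
    _ =ᵐ[P] P[P[f|n]|k] := condExp_congr_ae hsup
    _ = P[f|n] := condExp_of_stronglyMeasurable (hkG.trans hnG)
        (stronglyMeasurable_condExp.mono hnk) integrable_condExp

lemma condExp_mul_ind_eq_of_condExp_sup_eq (hnk : n ≤ k) (hkG : k ≤ n ⊔ G) (hnG : n ⊔ G ≤ mΩ)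
    (hsup : P[f|n ⊔ G] =ᵐ[P] P[f|n]) (hf : Integrable f P) {B : Set Ω}
    (hB : MeasurableSet[G] B) : P[f * ind B|k] =ᵐ[P] P[f|n] * P[ind B|k] := by
  have hB' : MeasurableSet B := hnG B (le_sup_right (a := n) B hB)
  have hB_sm : StronglyMeasurable[n ⊔ G] (ind B) :=
    stronglyMeasurable_const.indicator (le_sup_right (a := n) B hB)
  calc P[f * ind B|k] =ᵐ[P] P[P[f * ind B|n ⊔ G]|k] := (condExp_condExp_of_le hkG hnG).symm
    _ =ᵐ[P] P[P[f|n] * ind B|k] := condExp_congr_ae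
        ((condExp_mul_of_stronglyMeasurable_right hB_sm (hf.mul_ind hB') hf).trans
          (hsup.mul .rfl))
    _ =ᵐ[P] P[f|n] * P[ind B|k] := condExp_mul_of_stronglyMeasurable_left
        (stronglyMeasurable_condExp.mono hnk) (integrable_condExp.mul_ind hB') (integrable_ind hB')

end ConditionalSup

/-- bridges of a Markov measure are Markov: for `A` past and `B` future,
`P(A ∩ B | X_0, X_t, X_1) = P(A | X_0, X_t) P(B | X_0, X_t, X_1)` a.s., and consequently past
and future are conditionally independent given `σ(X_0, X_t, X_1)`. -/
theorem bridges_of_markov_are_markov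
    [MeasurableSpace Ω] [MeasurableSpace 𝒳]
    (X : ℝ → Ω → 𝒳) (hX : ∀ t, Measurable (X t))
    (P : Measure Ω) [IsProbabilityMeasure P] (hP : IsMarkov X P) :
    ∀ t ∈ Set.Icc (0:ℝ) 1, ∀ A B : Set Ω,
      MeasurableSet[window X 0 t] A → MeasurableSet[window X t 1] B →
      (P[ind (A ∩ B) | at3 X t] =ᵐ[P] P[ind A | at2 X 0 t] * P[ind B | at3 X t]) ∧
      (P[ind (A ∩ B) | at3 X t] =ᵐ[P] P[ind A | at3 X t] * P[ind B | at3 X t]) := by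
  intro t ht A B hA hB
  have hpast := window_le hX 0 t
  have hfuture := window_le hX t 1
  have hnG := sup_le ((at2_le_window ht.1).trans hpast) hfuture
  have hsup : P[ind A|at2 X 0 t ⊔ window X t 1] =ᵐ[P] P[ind A|at2 X 0 t] :=
    CondIndepInd.condExp_ind_sup_eq (hP t ht) (at1_le_at2 0 t) (at2_le_window ht.1)
      hpast hfuture hA
  have hbridge : P[ind (A ∩ B)|at3 X t] =ᵐ[P] P[ind A|at2 X 0 t] * P[ind B|at3 X t] := by
    rw [ind_inter]
    exact condExp_mul_ind_eq_of_condExp_sup_eq (at2_le_at3 t) (at3_le_at2_sup_window ht.2) hnG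
      hsup (integrable_ind (hpast A hA)) hB
  exact ⟨hbridge, hbridge.trans <| (condExp_eq_of_condExp_sup_eq (at2_le_at3 t)
    (at3_le_at2_sup_window ht.2) hnG hsup).symm.mul .rfl⟩
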